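/- arXiv:2301.00885 — 6 statements merged into one kernel-verified Lean document; each statement's English description precedes it below -/
import Mathlib

section
/- Let Γ be a finite group, k an arbitrary field, and V a nonzero finite-dimensional k-linear representation of Γ. Then the limit β(Γ,V) = lim_{n→∞} s_n(Γ,V)^{1/n} exists and equals dim_k V. -/
/-!
A decomposition of `V^{⊗n}` into nonzero summands has at most `dim V^{⊗n} = d^n` pieces, so
`s_n ≤ d^n`. For the converse, let `K` be the kernel of `Γ → PGL(V)`. For `g ∉ K` choose
`y_g ∈ V` and `f_g ∈ V^*` with `f_g y_g = 1` and `f_g (g y_g) = 0`; then `y = ⊗ y_g` and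
`f = ⊗ f_g` satisfy `f y = 1` and `f (g y) = 0` for all `g ∉ K`. Tensoring with the `d^n` basis
tensors `b_j` of `V^{⊗n}` gives rank-one orthogonal idempotents `e_j = (f ⊗ b_j^*)(·) • (y ⊗ b_j)`
of `V^{⊗(m+n)}` with `e_i g e_j = 0` for `g ∉ K`, while `K` acts by scalars. Their relative traces
`∑_{t ∈ Γ/K} t e_j t⁻¹` are then `d^n` nonzero `Γ`-equivariant orthogonal idempotents, so
`s_{m+n} ≥ d^n`. Squeezing `d^{1 - m/n} ≤ s_n^{1/n} ≤ d` gives the limit.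
-/

open scoped TensorProduct

/-- `sN k ρ n` is the supremum of the cardinalities of finite families of nonzero
`Γ`-invariant subspaces of `V^{⊗n}` (with the diagonal action induced by `ρ`) forming an
internal direct sum decomposition of `V^{⊗n}`; i.e. the number of indecomposable direct
summands of `V^{⊗n}` counted with multiplicity. -/
noncomputable def sN (k : Type*) [Field k] {Γ V : Type*} [AddCommGroup V] [Module k V]
    (ρ : Γ → (V →ₗ[k] V)) (n : ℕ) : ℕ :=
  sSup {m : ℕ | ∃ W : Fin m → Submodule k (⨂[k]^n V),
    (∀ i, W i ≠ ⊥) ∧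
    (∀ i (g : Γ), ∀ x ∈ W i, (PiTensorProduct.map fun _ : Fin n => ρ g) x ∈ W i) ∧
    DirectSum.IsInternal W}

section Decomposition

theorem OrthogonalIdempotents.completeOrthogonalIdempotents_update {ι R : Type*} [Fintype ι]
    [DecidableEq ι] [Ring R] {e : ι → R} (he : OrthogonalIdempotents e) (i₀ : ι) :
    CompleteOrthogonalIdempotents (Function.update e i₀ (e i₀ + (1 - ∑ i, e i))) := by
  have hc := (CompleteOrthogonalIdempotents.option he).toOrthogonalIdempotents
  have hc_mul : ∀ i, (1 - ∑ i, e i) * e i = 0 := fun i => hc.ortho (Option.some_ne_none i).symm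
  have hmul_c : ∀ i, e i * (1 - ∑ i, e i) = 0 := fun i => hc.ortho (Option.some_ne_none i)
  rw [CompleteOrthogonalIdempotents.iff_ortho_complete]
  constructor
  · intro i j hij
    rcases eq_or_ne i i₀ with rfl | hi
    · simp [Function.update_of_ne hij.symm, add_mul, he.ortho hij, hc_mul]
    rcases eq_or_ne j i₀ with rfl | hj
    · simp [Function.update_of_ne hi, mul_add, he.ortho hij, hmul_c]
    · simp [Function.update_of_ne hi, Function.update_of_ne hj, he.ortho hij]
  · rw [Finset.sum_update_of_mem (Finset.mem_univ i₀),
      ← Finset.add_sum_erase _ _ (Finset.mem_univ i₀)]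
    simp only [Finset.sdiff_singleton_eq_erase]
    abel

variable {R M ι : Type*} [Ring R] [AddCommGroup M] [Module R M] [Fintype ι] [DecidableEq ι]

theorem CompleteOrthogonalIdempotents.isInternal_range {e : ι → Module.End R M}
    (he : CompleteOrthogonalIdempotents e) :
    DirectSum.IsInternal fun i => LinearMap.range (e i) := by
  refine DirectSum.isInternal_submodule_of_iSupIndep_of_iSup_eq_top (fun j => ?_) ?_
  · have hker : (⨆ i, ⨆ (_ : i ≠ j), LinearMap.range (e i)) ≤ LinearMap.ker (e j) :=
      iSup₂_le fun i hij => LinearMap.range_le_ker_iff.mpr (he.ortho hij.symm)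
    refine Submodule.disjoint_def.mpr fun x ⟨y, hy⟩ hx => ?_
    rw [← hy, ← (he.idem j).eq]
    simpa [hy] using hker hx
  · refine eq_top_iff.mpr fun x _ => ?_
    have hx : x = ∑ i, e i x := by rw [← LinearMap.sum_apply, he.complete, Module.End.one_apply]
    rw [hx]
    exact Submodule.sum_mem _ fun i _ => Submodule.mem_iSup_of_mem i (LinearMap.mem_range_self _ _)

theorem OrthogonalIdempotents.exists_isInternal_invariant [Nonempty ι] {Γ : Type*}
    {e : ι → Module.End R M} (he : OrthogonalIdempotents e) (hne : ∀ i, e i ≠ 0)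
    (T : Γ → Module.End R M) (hT : ∀ g i, Commute (T g) (e i)) :
    ∃ W : ι → Submodule R M, (∀ i, W i ≠ ⊥) ∧ (∀ i g, ∀ x ∈ W i, T g x ∈ W i) ∧
      DirectSum.IsInternal W := by
  obtain ⟨i₀⟩ := ‹Nonempty ι›
  set e' := Function.update e i₀ (e i₀ + (1 - ∑ i, e i))
  have he' := he.completeOrthogonalIdempotents_update i₀
  have hfix : ∀ i, e' i * e i = e i := by
    intro i
    rcases eq_or_ne i i₀ with rfl | hi
    · simp [e', add_mul, sub_mul, Finset.sum_mul, he.mul_eq]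
    · simp [e', Function.update_of_ne hi, (he.idem i).eq]
  have hT' : ∀ g i, Commute (T g) (e' i) := by
    intro g i
    rcases eq_or_ne i i₀ with rfl | hi
    · simpa [e'] using (hT g i).add_right ((Commute.one_right _).sub_right
        (Commute.sum_right _ _ _ fun j _ => hT g j))
    · simpa [e', Function.update_of_ne hi] using hT g i
  refine ⟨fun i => LinearMap.range (e' i), fun i => ?_, fun i g x ⟨y, hy⟩ => ?_,
    he'.isInternal_range⟩
  · rw [Ne, LinearMap.range_eq_bot]
    intro h
    exact hne i (by rw [← hfix i, h, zero_mul])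
  · exact ⟨T g y, by rw [← hy, ← Module.End.mul_apply, ← Module.End.mul_apply, hT' g i]⟩

end Decomposition

section Counting

variable {k V : Type*} [Field k] [AddCommGroup V] [Module k V] [FiniteDimensional k V]

theorem finrank_tensorPower (n : ℕ) :
    Module.finrank k (⨂[k]^n V) = Module.finrank k V ^ n := by
  rw [Module.finrank_eq_card_basis
    (Basis.piTensorProduct fun _ : Fin n => Module.finBasis k V)]
  simp

theorem le_finrank_pow_of_isInternal {m n : ℕ} {W : Fin m → Submodule k (⨂[k]^n V)}
    (hW : ∀ i, W i ≠ ⊥) (hint : DirectSum.IsInternal W) : m ≤ Module.finrank k V ^ n := by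
  simpa [hW, finrank_tensorPower] using hint.submodule_iSupIndep.subtype_ne_bot_le_finrank

theorem sN_le_finrank_pow {Γ : Type*} (ρ : Γ → (V →ₗ[k] V)) (n : ℕ) :
    sN k ρ n ≤ Module.finrank k V ^ n :=
  csSup_le' fun _ ⟨_, hW, _, hint⟩ => le_finrank_pow_of_isInternal hW hint

theorem card_le_sN {Γ ι : Type*} [Fintype ι] [DecidableEq ι] [Nonempty ι]
    (ρ : Γ → (V →ₗ[k] V)) {n : ℕ} {e : ι → Module.End k (⨂[k]^n V)}
    (he : OrthogonalIdempotents e) (hne : ∀ i, e i ≠ 0)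
    (hcomm : ∀ g i, Commute (PiTensorProduct.map fun _ => ρ g) (e i)) :
    Fintype.card ι ≤ sN k ρ n := by
  obtain ⟨W, hW, hinv, hint⟩ := he.exists_isInternal_invariant hne _ hcomm
  let σ := (Fintype.equivFin ι).symm
  refine le_csSup ⟨_, fun _ ⟨_, hW, _, hint⟩ => le_finrank_pow_of_isInternal hW hint⟩
    ⟨W ∘ σ, fun i => hW _, fun i g => hinv _ g, ?_⟩
  rw [DirectSum.isInternal_submodule_iff_iSupIndep_and_iSup_eq_top] at hint ⊢
  exact ⟨hint.1.comp σ.injective, by rw [← hint.2]; exact σ.iSup_comp⟩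

end Counting

section RelativeTrace

variable {Γ R : Type*} [Group Γ] [Ring R] {ρ : Γ →* R} {K : Subgroup Γ}

theorem conj_eq_conj_of_inv_mul_mem {x : R} (hx : ∀ h ∈ K, Commute (ρ h) x) {a b : Γ}
    (hab : a⁻¹ * b ∈ K) : ρ b * x * ρ b⁻¹ = ρ a * x * ρ a⁻¹ := by
  obtain ⟨h, hh, rfl⟩ : ∃ h ∈ K, b = a * h := ⟨a⁻¹ * b, hab, by group⟩
  calc ρ (a * h) * x * ρ (a * h)⁻¹ = ρ a * (ρ h * x) * ρ h⁻¹ * ρ a⁻¹ := by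
        simp [mul_assoc]
    _ = ρ a * x * (ρ h * ρ h⁻¹) * ρ a⁻¹ := by rw [(hx h hh).eq]; simp [mul_assoc]
    _ = ρ a * x * ρ a⁻¹ := by rw [← map_mul, mul_inv_cancel, map_one, mul_one]

theorem inv_out_mul_out_mem_iff {q r : Γ ⧸ K} : q.out⁻¹ * r.out ∈ K ↔ q = r := by
  rw [← QuotientGroup.eq, QuotientGroup.out_eq', QuotientGroup.out_eq']

variable (ρ K) [Fintype (Γ ⧸ K)]

/-- The relative trace `Tr_K^Γ x`. Only when `x` commutes with `ρ K` is it independent of the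
chosen coset representatives (and `Γ`-equivariant). -/
noncomputable def relTrace (x : R) : R :=
  ∑ q : Γ ⧸ K, ρ q.out * x * ρ q.out⁻¹

variable {ρ K}

theorem conj_relTrace {x : R} (hx : ∀ h ∈ K, Commute (ρ h) x) (g : Γ) :
    ρ g * relTrace ρ K x * ρ g⁻¹ = relTrace ρ K x := by
  rw [relTrace, Finset.mul_sum, Finset.sum_mul]
  refine Fintype.sum_equiv (MulAction.toPerm g) _ _ fun q => ?_
  rw [MulAction.toPerm_apply, ← conj_eq_conj_of_inv_mul_mem hx (a := (g • q).out) (b := g * q.out)]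
  · simp [mul_assoc]
  · rw [← QuotientGroup.eq, QuotientGroup.out_eq']
    conv_lhs => rw [← QuotientGroup.out_eq' q]
    rfl

theorem commute_relTrace {x : R} (hx : ∀ h ∈ K, Commute (ρ h) x) (g : Γ) :
    Commute (ρ g) (relTrace ρ K x) := by
  have hg : ρ g⁻¹ * ρ g = 1 := by rw [← map_mul, inv_mul_cancel, map_one]
  calc ρ g * relTrace ρ K x = ρ g * relTrace ρ K x * ρ g⁻¹ * ρ g := by
        rw [mul_assoc _ (ρ g⁻¹), hg, mul_one]
    _ = relTrace ρ K x * ρ g := by rw [conj_relTrace hx]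

theorem relTrace_mul_relTrace {x y : R} (hsep : ∀ h ∉ K, x * ρ h * y = 0) :
    relTrace ρ K x * relTrace ρ K y = relTrace ρ K (x * y) := by
  have hconj : ∀ a b : Γ, ρ a * x * ρ a⁻¹ * (ρ b * y * ρ b⁻¹) =
      ρ a * (x * ρ (a⁻¹ * b) * y) * ρ b⁻¹ := by
    intro a b
    simp [mul_assoc]
  rw [relTrace, relTrace, relTrace, Finset.sum_mul_sum]
  refine Finset.sum_congr rfl fun q _ => ?_
  rw [Finset.sum_eq_single q, hconj, inv_mul_cancel, map_one, mul_one]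
  · intro r _ hrq
    rw [hconj, hsep _ (inv_out_mul_out_mem_iff.not.mpr hrq.symm), mul_zero, zero_mul]
  · simp

theorem relTrace_mul {x y : R} (hx : ∀ h ∈ K, Commute (ρ h) x)
    (hsep : ∀ h ∉ K, x * ρ h * y = 0) : relTrace ρ K x * y = x * y := by
  rw [relTrace, Finset.sum_mul, Finset.sum_eq_single ((1 : Γ) : Γ ⧸ K)]
  · rw [conj_eq_conj_of_inv_mul_mem hx (a := 1), inv_one, map_one, one_mul, mul_one]
    exact QuotientGroup.eq.mp (QuotientGroup.out_eq' _).symm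
  · intro q _ hq
    have hnot : q.out⁻¹ ∉ K := by
      rw [inv_mem_iff]
      intro h
      apply hq
      rw [← QuotientGroup.out_eq' q]
      exact (QuotientGroup.eq.mpr (by simpa using h)).symm
    rw [mul_assoc, mul_assoc, ← mul_assoc x, hsep _ hnot, mul_zero]
  · simp

theorem orthogonalIdempotents_relTrace {ι : Type*} {e : ι → R} (he : OrthogonalIdempotents e)
    (hsep : ∀ h ∉ K, ∀ i j, e i * ρ h * e j = 0) :
    OrthogonalIdempotents fun i => relTrace ρ K (e i) where
  idem i := by
    rw [IsIdempotentElem, relTrace_mul_relTrace (hsep · · i i), (he.idem i).eq]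
  ortho i j hij := by
    simp only
    rw [relTrace_mul_relTrace (hsep · · i j), he.ortho hij]
    simp [relTrace]

end RelativeTrace

section RankOne

variable {R M ι : Type*} [CommRing R] [AddCommGroup M] [Module R M]

theorem smulRight_mul_mul_smulRight (φ ψ : Module.Dual R M) (x y : M) (T : Module.End R M) :
    φ.smulRight x * T * ψ.smulRight y = ψ.smulRight (φ (T y) • x) := by
  ext v
  simp [smul_smul]

theorem orthogonalIdempotents_smulRight [DecidableEq ι] {x : ι → M} {φ : ι → Module.Dual R M}
    (h : ∀ i j, φ i (x j) = if i = j then 1 else 0) :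
    OrthogonalIdempotents fun i => (φ i).smulRight (x i) := by
  rw [OrthogonalIdempotents.iff_mul_eq]
  intro i j
  have hmul := smulRight_mul_mul_smulRight (φ i) (φ j) (x i) (x j) 1
  rw [mul_one] at hmul
  rw [hmul, Module.End.one_apply, h]
  split_ifs with hij
  · rw [hij, one_smul]
  · rw [zero_smul]
    ext v
    simp

end RankOne

section Separation

variable {k V : Type*} [Field k] [AddCommGroup V] [Module k V]

theorem exists_dual_apply_eq_one_apply_eq_zero {T : V →ₗ[k] V} (hT : ∀ c : k, T ≠ c • 1) :
    ∃ (v : V) (f : Module.Dual k V), f v = 1 ∧ f (T v) = 0 := by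
  obtain ⟨v, hv⟩ : ∃ v, LinearIndependent k ![v, T v] := by
    by_contra! h
    obtain ⟨c, hc⟩ := T.exists_eq_smul_id_of_forall_notLinearIndependent h
    exact hT c hc
  set p := k ∙ T v
  have hvp : p.mkQ v ≠ 0 := by
    rw [Submodule.mkQ_apply, Ne, Submodule.Quotient.mk_eq_zero, Submodule.mem_span_singleton]
    rintro ⟨a, ha⟩
    exact (linearIndependent_fin2.mp hv).2 a (by simpa using ha)
  obtain ⟨f, hf⟩ := Module.Projective.exists_dual_eq_one k hvp
  refine ⟨v, f ∘ₗ p.mkQ, hf, ?_⟩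
  simp [p, (Submodule.Quotient.mk_eq_zero p).mpr (Submodule.mem_span_singleton_self _)]

variable {Γ : Type*} [Group Γ]

/-- The elements of `Γ` acting on `V` by a scalar: the kernel of `Γ → PGL(V)`. -/
def projectiveKernel (ρ : Γ →* LinearMap.GeneralLinearGroup k V) : Subgroup Γ :=
  (Units.map (algebraMap k (Module.End k V)).toMonoidHom).range.comap ρ

theorem exists_eq_algebraMap_of_mem_projectiveKernel
    {ρ : Γ →* LinearMap.GeneralLinearGroup k V} {g : Γ} (hg : g ∈ projectiveKernel ρ) :
    ∃ c : k, (ρ g : Module.End k V) = algebraMap k _ c := by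
  obtain ⟨c, hc⟩ := hg
  exact ⟨c, by rw [← hc]; rfl⟩

theorem ne_smul_one_of_notMem_projectiveKernel [Nontrivial V]
    {ρ : Γ →* LinearMap.GeneralLinearGroup k V} {g : Γ} (hg : g ∉ projectiveKernel ρ) (c : k) :
    (ρ g : Module.End k V) ≠ c • 1 := by
  intro hc
  have hc0 : c ≠ 0 := by
    rintro rfl
    rw [zero_smul] at hc
    exact (ρ g).ne_zero hc
  exact hg ⟨Units.mk0 c hc0, Units.ext (by simp [hc, Algebra.algebraMap_eq_smul_one])⟩

theorem exists_prod_apply_eq_one_and_eq_zero [Nontrivial V] [Finite Γ]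
    (ρ : Γ →* LinearMap.GeneralLinearGroup k V) :
    ∃ (m : ℕ) (y : Fin m → V) (f : Fin m → Module.Dual k V), ∏ s, f s (y s) = 1 ∧
      ∀ g ∉ projectiveKernel ρ, ∏ s, f s ((ρ g : Module.End k V) (y s)) = 0 := by
  have hsep : ∀ g : Γ, ∃ (v : V) (f : Module.Dual k V), f v = 1 ∧
      (g ∉ projectiveKernel ρ → f ((ρ g : Module.End k V) v) = 0) := by
    intro g
    by_cases hg : g ∈ projectiveKernel ρ
    · obtain ⟨v, hv⟩ := exists_ne (0 : V)
      obtain ⟨f, hf⟩ := Module.Projective.exists_dual_eq_one k hv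
      exact ⟨v, f, hf, absurd hg⟩
    · obtain ⟨v, f, hfv, hfg⟩ :=
        exists_dual_apply_eq_one_apply_eq_zero (ne_smul_one_of_notMem_projectiveKernel hg)
      exact ⟨v, f, hfv, fun _ => hfg⟩
  choose v f hfv hfg using hsep
  let e := (Finite.equivFin Γ).symm
  refine ⟨Nat.card Γ, v ∘ e, f ∘ e, by simp [hfv], fun g hg => ?_⟩
  exact Finset.prod_eq_zero (Finset.mem_univ (e.symm g)) (by simpa using hfg g hg)

end Separation

section TensorPower

theorem PiTensorProduct.map_algebraMap {R ι : Type*} [CommSemiring R] [Fintype ι]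
    {M : ι → Type*} [∀ i, AddCommMonoid (M i)] [∀ i, Module R (M i)] (c : R) :
    (PiTensorProduct.map fun i => algebraMap R (Module.End R (M i)) c) =
      algebraMap R _ (c ^ Fintype.card ι) := by
  ext v
  simp [Algebra.algebraMap_eq_smul_one, MultilinearMap.map_smul_univ]

variable {k V Γ : Type*} [Field k] [AddCommGroup V] [Module k V] [Group Γ]

def tensorPowerRep (π : Representation k Γ V) (n : ℕ) : Representation k Γ (⨂[k]^n V) :=
  PiTensorProduct.mapMonoidHom.comp (MonoidHom.pi fun _ => π)

theorem tensorPowerRep_apply (π : Representation k Γ V) (n : ℕ) (g : Γ) :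
    tensorPowerRep π n g = PiTensorProduct.map fun _ => π g := rfl

end TensorPower

section LowerBound

variable {k V Γ : Type*} [Field k] [AddCommGroup V] [Module k V] [Group Γ]

theorem exists_orthogonalIdempotents_tensorPower [FiniteDimensional k V]
    {π : Representation k Γ V} {K : Subgroup Γ} {m : ℕ} {y : Fin m → V}
    {f : Fin m → Module.Dual k V} (hone : ∏ s, f s (y s) = 1)
    (hzero : ∀ g ∉ K, ∏ s, f s (π g (y s)) = 0) (n : ℕ) :
    ∃ e : (Fin n → Fin (Module.finrank k V)) → Module.End k (⨂[k]^(m + n) V),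
      OrthogonalIdempotents e ∧ (∀ i, e i ≠ 0) ∧
      ∀ g ∉ K, ∀ i j, e i * tensorPowerRep π (m + n) g * e j = 0 := by
  classical
  let b := Module.finBasis k V
  let X : (Fin n → Fin (Module.finrank k V)) → ⨂[k]^(m + n) V :=
    fun j => ⨂ₜ[k] s, Fin.append y (b ∘ j) s
  let φ : (Fin n → Fin (Module.finrank k V)) → Module.Dual k (⨂[k]^(m + n) V) :=
    fun i => PiTensorProduct.dualDistrib (⨂ₜ[k] s, Fin.append f (b.coord ∘ i) s)
  have hφ : ∀ g i j, φ i (tensorPowerRep π (m + n) g (X j)) =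
      (∏ s, f s (π g (y s))) * ∏ p, b.coord (i p) (π g (b (j p))) := by
    intro g i j
    simp [X, φ, tensorPowerRep_apply, Fin.prod_univ_add]
  have hdual : ∀ i j, φ i (X j) = if i = j then 1 else 0 := by
    intro i j
    simpa [hone, Finsupp.single_apply, Finset.prod_boole, funext_iff, eq_comm] using hφ 1 i j
  have hX : ∀ i, X i ≠ 0 := fun i h => by simpa [h] using hdual i i
  refine ⟨fun i => (φ i).smulRight (X i), orthogonalIdempotents_smulRight hdual,
    fun i h => hX i ?_, fun g hg i j => ?_⟩
  · simpa [hdual] using LinearMap.congr_fun h (X i)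
  · rw [smulRight_mul_mul_smulRight, hφ, hzero g hg, zero_mul, zero_smul]
    ext
    simp

theorem exists_pow_finrank_le_sN [Finite Γ] [FiniteDimensional k V] [Nontrivial V]
    (ρ : Γ →* LinearMap.GeneralLinearGroup k V) :
    ∃ m, ∀ n, Module.finrank k V ^ n ≤ sN k (fun g => (ρ g : V →ₗ[k] V)) (m + n) := by
  have := Fintype.ofFinite (Γ ⧸ projectiveKernel ρ)
  obtain ⟨m, y, f, hone, hzero⟩ := exists_prod_apply_eq_one_and_eq_zero ρ
  refine ⟨m, fun n => ?_⟩
  let π : Representation k Γ V := (Units.coeHom _).comp ρ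
  obtain ⟨e, he, hne, hsep⟩ := exists_orthogonalIdempotents_tensorPower (π := π) hone hzero n
  have hcentral : ∀ g ∈ projectiveKernel ρ, ∀ x, Commute (tensorPowerRep π (m + n) g) x := by
    intro g hg x
    obtain ⟨c, hc⟩ := exists_eq_algebraMap_of_mem_projectiveKernel hg
    rw [tensorPowerRep_apply]
    simp only [π, MonoidHom.comp_apply, Units.coeHom_apply, hc, PiTensorProduct.map_algebraMap]
    exact Algebra.commute_algebraMap_left _ x
  have hne' : ∀ i, relTrace (tensorPowerRep π (m + n)) (projectiveKernel ρ) (e i) ≠ 0 := by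
    intro i h
    apply hne i
    rw [← (he.idem i).eq, ← relTrace_mul (hcentral · · _) (hsep · · i i), h, zero_mul]
  have : Nonempty (Fin n → Fin (Module.finrank k V)) := ⟨fun _ => ⟨0, Module.finrank_pos⟩⟩
  simpa using card_le_sN (fun g => (ρ g : V →ₗ[k] V)) (orthogonalIdempotents_relTrace he hsep)
    hne' fun g i => commute_relTrace (hcentral · · _) g

end LowerBound

open Filter Topology in
theorem tendsto_rpow_inv_of_pow_le_of_le_pow {u : ℕ → ℝ} {d : ℝ} (hd : 0 < d) {m : ℕ}
    (hlow : ∀ n, d ^ n ≤ u (m + n)) (hup : ∀ n, u n ≤ d ^ n) :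
    Tendsto (fun n => u n ^ (n : ℝ)⁻¹) atTop (𝓝 d) := by
  have hlim : Tendsto (fun n : ℕ => d ^ (1 - (m : ℝ) * (n : ℝ)⁻¹)) atTop (𝓝 d) := by
    have := (Real.continuousAt_const_rpow hd.ne').tendsto.comp
      ((tendsto_inv_atTop_nhds_zero_nat.const_mul (m : ℝ)).const_sub 1)
    rwa [mul_zero, sub_zero, Real.rpow_one] at this
  refine tendsto_of_tendsto_of_tendsto_of_le_of_le' hlim tendsto_const_nhds ?_ ?_
  · filter_upwards [eventually_ge_atTop (m + 1)] with n hn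
    obtain ⟨j, rfl⟩ := Nat.exists_eq_add_of_le (Nat.le_of_succ_le hn)
    calc d ^ (1 - (m : ℝ) * ((m + j : ℕ) : ℝ)⁻¹) = (d ^ j) ^ ((m + j : ℕ) : ℝ)⁻¹ := by
          rw [← Real.rpow_natCast, ← Real.rpow_mul hd.le]
          have hmj : (m + j : ℝ) ≠ 0 := by norm_cast; omega
          push_cast
          congr 1
          field_simp
          ring
      _ ≤ u (m + j) ^ ((m + j : ℕ) : ℝ)⁻¹ := by gcongr; exact hlow j
  · filter_upwards [eventually_ge_atTop (m + 1)] with n hn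
    obtain ⟨j, rfl⟩ := Nat.exists_eq_add_of_le (Nat.le_of_succ_le hn)
    calc u (m + j) ^ ((m + j : ℕ) : ℝ)⁻¹ ≤ (d ^ (m + j)) ^ ((m + j : ℕ) : ℝ)⁻¹ := by
          gcongr
          · exact (pow_pos hd j).le.trans (hlow j)
          · exact hup _
      _ = d := Real.pow_rpow_inv_natCast hd.le (by omega)

theorem stmt0 (k : Type*) [Field k] (Γ : Type*) [Group Γ] [Finite Γ]
    (V : Type*) [AddCommGroup V] [Module k V] [FiniteDimensional k V] [Nontrivial V]
    (ρ : Γ →* LinearMap.GeneralLinearGroup k V) :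
    Filter.Tendsto (fun n : ℕ => (sN k (fun g => (ρ g : V →ₗ[k] V)) n : ℝ) ^ ((n : ℝ)⁻¹))
      Filter.atTop (nhds (Module.finrank k V)) := by
  obtain ⟨m, hm⟩ := exists_pow_finrank_le_sN ρ
  refine tendsto_rpow_inv_of_pow_le_of_le_pow (Nat.cast_pos.mpr Module.finrank_pos) (m := m)
    (fun n => ?_) (fun n => ?_)
  · exact_mod_cast hm n
  · exact_mod_cast sN_le_finrank_pow _ n
end

section
/- Let Γ be a monoid, k a field, and V a finite-dimensional k-linear representation of Γ. Then the sequence (s_n(Γ,V)) is supermultiplicative: for all n, m ∈ ℕ one has s_n(Γ,V)·s_m(Γ,V) ≤ s_{n+m}(Γ,V). (Concretely: if V^⊗n is an internal direct sum of a family of a nonzero Γ-invariant subspaces and V^⊗m of b such subspaces, then under the canonical Γ-equivariant isomorphism V^⊗(n+m) ≅ V^⊗n ⊗ V^⊗m, the pairwise tensor products give an internal direct sum decomposition of V^⊗(n+m) into a·b nonzero Γ-invariant subspaces.) -/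
/-!
If `V^⊗n = ⨁ᵢ Wᵢ` and `V^⊗m = ⨁ⱼ Uⱼ` are decompositions into nonzero invariant subspaces, then
transporting the subspaces `Wᵢ ⊗ Uⱼ` of `V^⊗n ⊗ V^⊗m` along the equivariant isomorphism
`V^⊗n ⊗ V^⊗m ≃ V^⊗(n+m)` decomposes `V^⊗(n+m)` into `a * b` invariant subspaces: the tensor
product distributes over direct sums, and over a field the tensor product of nonzero spaces is
nonzero. Since `V` is finite-dimensional, the number of summands is bounded by the dimension, so
each supremum `sN` is attained and the products of attained values bound `sN (n + m)`.
-/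

open scoped TensorProduct DirectSum

theorem Nat.sSup_mul_sSup_le {s t u : Set ℕ} (hs : BddAbove s) (ht : BddAbove t)
    (hu : BddAbove u) (h : ∀ a ∈ s, ∀ b ∈ t, a * b ∈ u) : sSup s * sSup t ≤ sSup u := by
  obtain rfl | hs₀ := s.eq_empty_or_nonempty
  · simp
  obtain rfl | ht₀ := t.eq_empty_or_nonempty
  · simp
  exact le_csSup hu (h _ (Nat.sSup_mem hs₀ hs) _ (Nat.sSup_mem ht₀ ht))

theorem TensorProduct.map_mem_range_mapIncl {R A B : Type*} [CommSemiring R]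
    [AddCommMonoid A] [Module R A] [AddCommMonoid B] [Module R B]
    {F : A →ₗ[R] A} {G : B →ₗ[R] B} {W : Submodule R A} {U : Submodule R B}
    (hF : ∀ x ∈ W, F x ∈ W) (hG : ∀ x ∈ U, G x ∈ U) {y : A ⊗[R] B}
    (hy : y ∈ LinearMap.range (mapIncl W U)) :
    map F G y ∈ LinearMap.range (mapIncl W U) := by
  obtain ⟨z, rfl⟩ := hy
  refine ⟨map (F.restrict hF) (G.restrict hG) z, ?_⟩
  rw [← LinearMap.comp_apply, ← LinearMap.comp_apply, mapIncl, ← map_comp, ← map_comp]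
  rfl

theorem TensorProduct.range_mapIncl_ne_bot {k A B : Type*} [Field k]
    [AddCommGroup A] [Module k A] [AddCommGroup B] [Module k B]
    {W : Submodule k A} {U : Submodule k B} (hW : W ≠ ⊥) (hU : U ≠ ⊥) :
    LinearMap.range (mapIncl W U) ≠ ⊥ := by
  have := Submodule.nontrivial_iff_ne_bot.2 hW
  have := Submodule.nontrivial_iff_ne_bot.2 hU
  obtain ⟨x, hx⟩ := exists_ne (0 : W ⊗[k] U)
  rw [Ne, LinearMap.range_eq_bot]
  intro h
  exact hx (Module.Flat.tensorProduct_mapIncl_injective_of_right W U (by simp [h]))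

theorem DirectSum.IsInternal.tensorProduct {R A B ι κ : Type*} [CommSemiring R]
    [AddCommMonoid A] [Module R A] [AddCommMonoid B] [Module R B] [DecidableEq ι] [DecidableEq κ]
    {W : ι → Submodule R A} {U : κ → Submodule R B} (hW : IsInternal W) (hU : IsInternal U) :
    IsInternal fun p : ι × κ => LinearMap.range (TensorProduct.mapIncl (W p.1) (U p.2)) := by
  let distrib : (⨁ p : ι × κ, W p.1 ⊗[R] U p.2) ≃ₗ[R] A ⊗[R] B :=
    (TensorProduct.directSum R R (fun i => W i) (fun j => U j)).symm ≪≫ₗ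
      TensorProduct.congr (.ofBijective (coeLinearMap W) hW) (.ofBijective (coeLinearMap U) hU)
  let toRanges := DirectSum.lmap fun p : ι × κ => (TensorProduct.mapIncl (W p.1) (U p.2)).rangeRestrict
  have toRanges_surjective : Function.Surjective toRanges :=
    (DirectSum.lmap_surjective _).2 fun p => LinearMap.surjective_rangeRestrict _
  -- `coeLinearMap` after a surjection is an isomorphism, so no injectivity of `mapIncl` is needed
  have hcomp : DirectSum.coeLinearMap _ ∘ₗ toRanges = distrib.toLinearMap := by
    refine DirectSum.linearMap_ext R fun p => TensorProduct.ext' fun w u => ?_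
    obtain ⟨i, j⟩ := p
    simp only [distrib, toRanges, LinearMap.coe_comp, Function.comp_apply, lmap_lof, coeLinearMap_lof,
      LinearMap.codRestrict_apply, TensorProduct.map_tmul, Submodule.subtype_apply,
      LinearEquiv.coe_coe, LinearEquiv.trans_apply, TensorProduct.directSum_symm_lof_tmul,
      TensorProduct.congr_tmul]
    exact congrArg₂ _ (coeLinearMap_lof W i w).symm (coeLinearMap_lof U j u).symm
  have hbij : Function.Bijective (DirectSum.coeLinearMap _ ∘ toRanges) := by
    rw [← LinearMap.coe_comp, hcomp]; exact distrib.bijective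
  exact ⟨hbij.1.of_comp_right toRanges_surjective, hbij.2.of_comp⟩

theorem TensorPower.map_comp_mulEquiv {R M : Type*} [CommSemiring R] [AddCommMonoid M]
    [Module R M] (f : M →ₗ[R] M) (n m : ℕ) :
    PiTensorProduct.map (fun _ : Fin (n + m) => f) ∘ₗ
        (mulEquiv : ⨂[R]^n M ⊗[R] ⨂[R]^m M ≃ₗ[R] ⨂[R]^(n + m) M).toLinearMap =
      mulEquiv.toLinearMap ∘ₗ
        TensorProduct.map (PiTensorProduct.map fun _ => f) (PiTensorProduct.map fun _ => f) := by
  ext a b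
  simp only [LinearMap.compMultilinearMap_apply, TensorProduct.AlgebraTensorModule.curry_apply,
    TensorProduct.curry_apply, LinearMap.coe_restrictScalars, LinearMap.coe_comp,
    LinearEquiv.coe_coe, Function.comp_apply, TensorProduct.map_tmul, PiTensorProduct.map_tprod,
    ← gMul_def, tprod_mul_tprod]
  congr 1
  ext i
  refine Fin.addCases (fun i => ?_) (fun i => ?_) i <;> simp

structure IsInvariantDecomposition {R Γ A ι : Type*} [Semiring R] [AddCommMonoid A] [Module R A]
    [DecidableEq ι] (F : Γ → Module.End R A) (W : ι → Submodule R A) : Prop where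
  ne_bot : ∀ i, W i ≠ ⊥
  mapsTo : ∀ i g, ∀ x ∈ W i, F g x ∈ W i
  isInternal : DirectSum.IsInternal W

namespace IsInvariantDecomposition

section Ring

variable {R Γ A B ι ι' : Type*} [Ring R] [AddCommGroup A] [Module R A] [AddCommGroup B]
  [Module R B] [DecidableEq ι] [DecidableEq ι'] {F : Γ → Module.End R A} {W : ι → Submodule R A}

theorem comp_equiv (h : IsInvariantDecomposition F W) (e : ι' ≃ ι) :
    IsInvariantDecomposition F (W ∘ e) where
  ne_bot i := h.ne_bot (e i)
  mapsTo i := h.mapsTo (e i)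
  isInternal := by
    obtain ⟨hind, htop⟩ :=
      (DirectSum.isInternal_submodule_iff_iSupIndep_and_iSup_eq_top W).1 h.isInternal
    exact (DirectSum.isInternal_submodule_iff_iSupIndep_and_iSup_eq_top _).2
      ⟨hind.comp e.injective, e.iSup_comp.trans htop⟩

theorem map_linearEquiv (h : IsInvariantDecomposition F W) (e : A ≃ₗ[R] B)
    {G : Γ → Module.End R B} (he : ∀ g x, G g (e x) = e (F g x)) :
    IsInvariantDecomposition G fun i => (W i).map e.toLinearMap where
  ne_bot i := by simpa using h.ne_bot i
  mapsTo := by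
    rintro i g _ ⟨x, hx, rfl⟩
    exact ⟨F g x, h.mapsTo i g x hx, (he g x).symm⟩
  isInternal := by
    obtain ⟨hind, htop⟩ :=
      (DirectSum.isInternal_submodule_iff_iSupIndep_and_iSup_eq_top W).1 h.isInternal
    refine (DirectSum.isInternal_submodule_iff_iSupIndep_and_iSup_eq_top _).2
      ⟨hind.map_orderIso (Submodule.orderIsoMapComap e), ?_⟩
    rw [← Submodule.map_iSup, htop, Submodule.map_top, LinearEquiv.range]

end Ring

section Field

variable {k Γ A B ι κ : Type*} [Field k] [AddCommGroup A] [Module k A] [AddCommGroup B]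
  [Module k B] [DecidableEq ι] [DecidableEq κ] {F : Γ → Module.End k A} {W : ι → Submodule k A}

theorem tensorProduct (hW : IsInvariantDecomposition F W) {G : Γ → Module.End k B}
    {U : κ → Submodule k B} (hU : IsInvariantDecomposition G U) :
    IsInvariantDecomposition (fun g => TensorProduct.map (F g) (G g))
      fun p : ι × κ => LinearMap.range (TensorProduct.mapIncl (W p.1) (U p.2)) where
  ne_bot p := TensorProduct.range_mapIncl_ne_bot (hW.ne_bot p.1) (hU.ne_bot p.2)
  mapsTo p g _ := TensorProduct.map_mem_range_mapIncl (hW.mapsTo p.1 g) (hU.mapsTo p.2 g)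
  isInternal := hW.isInternal.tensorProduct hU.isInternal

theorem card_le_finrank [Fintype ι] [FiniteDimensional k A] (h : IsInvariantDecomposition F W) :
    Fintype.card ι ≤ Module.finrank k A := by
  have := h.isInternal.submodule_iSupIndep.subtype_ne_bot_le_finrank
  rwa [Fintype.card_congr (Equiv.subtypeUnivEquiv h.ne_bot)] at this

end Field

end IsInvariantDecomposition

theorem bddAbove_setOf_isInvariantDecomposition {k Γ A : Type*} [Field k] [AddCommGroup A]
    [Module k A] [FiniteDimensional k A] (F : Γ → Module.End k A) :
    BddAbove {c | ∃ W : Fin c → Submodule k A, IsInvariantDecomposition F W} := by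
  refine ⟨Module.finrank k A, ?_⟩
  rintro c ⟨W, hW⟩
  simpa using hW.card_le_finrank

theorem sN_eq_sSup (k : Type*) [Field k] {Γ V : Type*} [AddCommGroup V] [Module k V]
    (ρ : Γ → Module.End k V) (n : ℕ) :
    sN k ρ n = sSup {c | ∃ W : Fin c → Submodule k (⨂[k]^n V),
      IsInvariantDecomposition (fun g => PiTensorProduct.map fun _ : Fin n => ρ g) W} := by
  refine congrArg sSup (Set.ext fun c => exists_congr fun W => ?_)
  exact ⟨fun ⟨h₁, h₂, h₃⟩ => ⟨h₁, h₂, h₃⟩, fun ⟨h₁, h₂, h₃⟩ => ⟨h₁, h₂, h₃⟩⟩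

theorem stmt5 (k : Type*) [Field k] (Γ : Type*) [Monoid Γ]
    (V : Type*) [AddCommGroup V] [Module k V] [FiniteDimensional k V]
    (ρ : Γ →* Module.End k V) :
    ∀ n m : ℕ, sN k (fun g => ρ g) n * sN k (fun g => ρ g) m ≤ sN k (fun g => ρ g) (n + m) := by
  intro n m
  simp only [sN_eq_sSup]
  refine Nat.sSup_mul_sSup_le (bddAbove_setOf_isInvariantDecomposition _)
    (bddAbove_setOf_isInvariantDecomposition _) (bddAbove_setOf_isInvariantDecomposition _) ?_
  rintro a ⟨W, hW⟩ b ⟨U, hU⟩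
  refine ⟨_, ((hW.tensorProduct hU).map_linearEquiv TensorPower.mulEquiv fun g x => ?_).comp_equiv
    finProdFinEquiv.symm⟩
  exact LinearMap.congr_fun (TensorPower.map_comp_mulEquiv (ρ g) n m) x
end

section
/- Let p ≥ 2 be a natural number and m ∈ ℕ. Write the base-p expansion m+1 = a_d·p^d + ⋯ + a_1·p + a_0 with digits 0 ≤ a_i ≤ p−1 and leading digit a_d ≠ 0, and let k be the number of indices i with 0 ≤ i ≤ d−1 and a_i ≠ 0. Then 2^k · a_d · p^d ≤ (m+1)^{1 + 1/log₂ p}, where the exponent is the real number 1 + (log₂ p)^{-1} and the power is a real power. (In the paper this gives the bound dim T(m) ≤ (m+1)^α, α = 1 + (log₂ p)^{-1}, for indecomposable tilting SL₂-representations in characteristic p, since dim T(m) = 2^k·a_d·p^d.) -/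
/-! Since `p ^ (1 / log₂ p) = 2`, raising `p ^ d ≤ m + 1` to the power `1 / log₂ p` gives
`2 ^ k ≤ 2 ^ d ≤ (m + 1) ^ (1 / log₂ p)`, while the leading term satisfies `a_d p ^ d ≤ m + 1`.
Multiplying the two bounds gives the claim. -/

open Real

theorem Real.rpow_one_div_logb_self {a b : ℝ} (ha : 0 < a) (hb : 0 < b) (hb₁ : b ≠ 1) :
    b ^ (1 / logb a b) = a := by
  rw [one_div, inv_logb, rpow_logb hb hb₁ ha]

theorem Real.two_pow_le_rpow_one_div_logb {b x : ℝ} (hb : 1 < b) {n : ℕ} (hx : b ^ n ≤ x) :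
    (2 : ℝ) ^ n ≤ x ^ (1 / logb 2 b) := by
  have hb₀ : 0 < b := by linarith
  calc (2 : ℝ) ^ n = (b ^ (1 / logb 2 b)) ^ n := by
        rw [rpow_one_div_logb_self two_pos hb₀ hb.ne']
    _ = (b ^ n) ^ (1 / logb 2 b) := by
        rw [← rpow_natCast, ← rpow_natCast, ← rpow_mul hb₀.le, ← rpow_mul hb₀.le, mul_comm]
    _ ≤ x ^ (1 / logb 2 b) :=
        rpow_le_rpow (by positivity) hx (div_nonneg zero_le_one (logb_nonneg one_lt_two hb.le))

theorem stmt12_general (p : ℕ) (hp : 2 ≤ p) (m : ℕ) (d : ℕ) (a : ℕ → ℕ)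
    (hlead : a d ≠ 0)
    (hexp : m + 1 = ∑ i ∈ Finset.range (d + 1), a i * p ^ i)
    (k : ℕ) (hk : k = (Finset.filter (fun i => a i ≠ 0) (Finset.range d)).card) :
    ((2 ^ k * a d * p ^ d : ℕ) : ℝ) ≤
      ((m + 1 : ℕ) : ℝ) ^ (1 + 1 / Real.logb 2 p) := by
  have hleading : a d * p ^ d ≤ m + 1 :=
    hexp ▸ Finset.single_le_sum (f := fun i => a i * p ^ i) (fun _ _ => Nat.zero_le _)
      (Finset.self_mem_range_succ d)
  have hpd : p ^ d ≤ m + 1 := (Nat.le_mul_of_pos_left _ (Nat.pos_of_ne_zero hlead)).trans hleading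
  have hkd : k ≤ d := hk ▸ (Finset.card_filter_le _ _).trans (Finset.card_range d).le
  have h2k : (2 : ℝ) ^ k ≤ ((m + 1 : ℕ) : ℝ) ^ (1 / logb 2 p) :=
    (pow_le_pow_right₀ one_le_two hkd).trans
      (two_pow_le_rpow_one_div_logb (by exact_mod_cast hp) (by exact_mod_cast hpd))
  rw [rpow_add (by positivity), rpow_one]
  calc ((2 ^ k * a d * p ^ d : ℕ) : ℝ) = ((a d * p ^ d : ℕ) : ℝ) * 2 ^ k := by push_cast; ring
    _ ≤ ((m + 1 : ℕ) : ℝ) * ((m + 1 : ℕ) : ℝ) ^ (1 / logb 2 p) := by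
        gcongr

theorem stmt12 (p : ℕ) (hp : 2 ≤ p) (m : ℕ) (d : ℕ) (a : ℕ → ℕ)
    (hdig : ∀ i ≤ d, a i ≤ p - 1) (hlead : a d ≠ 0)
    (hexp : m + 1 = ∑ i ∈ Finset.range (d + 1), a i * p ^ i)
    (k : ℕ) (hk : k = (Finset.filter (fun i => a i ≠ 0) (Finset.range d)).card) :
    ((2 ^ k * a d * p ^ d : ℕ) : ℝ) ≤
      ((m + 1 : ℕ) : ℝ) ^ (1 + 1 / Real.logb 2 p) :=
  stmt12_general p hp m d a hlead hexp k hk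
end

section
/- Let p, ℓ ≥ 2 be natural numbers. Define p^{(0)} = 1 and p^{(i)} = p^{i−1}·ℓ for i ≥ 1, and set p' = min(p,ℓ). Let m ∈ ℕ and suppose m+1 = Σ_{i=0}^d a_i·p^{(i)} with digits satisfying 0 ≤ a_0 ≤ ℓ−1, 0 ≤ a_i ≤ p−1 for 1 ≤ i ≤ d, and a_d ≠ 0. Let k be the number of indices i with 0 ≤ i ≤ d−1 and a_i ≠ 0. Then 2^k · a_d · p^{(d)} ≤ (m+1)^{1 + 1/log₂ p'}, where the exponent is the real number 1 + (log₂ p')^{-1} and the power is a real power. (In the paper this gives the bound dim T(m) ≤ (m+1)^α for indecomposable tilting representations of the quantum group U_q(sl₂) in mixed characteristic (p,ℓ), since dim T(m) = 2^k·a_d·p^{(d)}.) -/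
/-!
Put `q = min p ℓ`. Then `q ^ d ≤ p^{(d)}`, and the leading term `a_d p^{(d)}` is at most `m + 1`;
since `k ≤ d`, this gives `q ^ k ≤ m + 1`. Because
`q ^ (1 / log₂ q) = 2`, raising to the power `1 / log₂ q` turns this into `2 ^ k ≤ (m + 1) ^ (1 / log₂ q)`,
and multiplying by `a_d p^{(d)} ≤ m + 1` gives the bound.
-/

open Real

lemma two_pow_le_rpow_inv_logb_of_pow_le {q x : ℝ} (hq : 1 < q) {k : ℕ} (h : q ^ k ≤ x) :
    (2 : ℝ) ^ k ≤ x ^ (1 / logb 2 q) := by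
  have hq0 : 0 < q := by linarith
  rw [one_div, inv_logb]
  calc (2 : ℝ) ^ k = (q ^ logb q 2) ^ k := by rw [rpow_logb hq0 hq.ne' two_pos]
    _ = (q ^ k) ^ logb q 2 := by rw [← rpow_mul_natCast hq0.le, mul_comm, rpow_natCast_mul hq0.le]
    _ ≤ x ^ logb q 2 := rpow_le_rpow (by positivity) h (logb_nonneg hq (by norm_num))

lemma min_pow_le_pow_pred_mul (p ℓ : ℕ) {d : ℕ} (hd : 1 ≤ d) :
    min p ℓ ^ d ≤ p ^ (d - 1) * ℓ := by
  obtain ⟨e, rfl⟩ := Nat.exists_eq_add_of_le' hd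
  rw [pow_succ, Nat.add_sub_cancel]
  exact Nat.mul_le_mul (Nat.pow_le_pow_left (min_le_left p ℓ) e) (min_le_right p ℓ)

theorem stmt13_general (p ℓ : ℕ) (hp : 2 ≤ p) (hl : 2 ≤ ℓ) (m : ℕ) (d : ℕ) (a : ℕ → ℕ)
    (P : ℕ → ℕ) (hP0 : P 0 = 1) (hP : ∀ i : ℕ, 1 ≤ i → P i = p ^ (i - 1) * ℓ)
    (hlead : a d ≠ 0)
    (hexp : m + 1 = ∑ i ∈ Finset.range (d + 1), a i * P i)
    (k : ℕ) (hk : k = (Finset.filter (fun i => a i ≠ 0) (Finset.range d)).card) :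
    ((2 ^ k * a d * P d : ℕ) : ℝ) ≤
      ((m + 1 : ℕ) : ℝ) ^ (1 + 1 / Real.logb 2 (min p ℓ)) := by
  have hlead_le : a d * P d ≤ m + 1 := hexp ▸
    Finset.single_le_sum (f := fun i => a i * P i) (fun _ _ => Nat.zero_le _)
      (Finset.self_mem_range_succ d)
  have hPd : min p ℓ ^ d ≤ P d := by
    rcases Nat.eq_zero_or_pos d with rfl | hd
    · simp [hP0]
    · exact hP d hd ▸ min_pow_le_pow_pred_mul p ℓ hd
  have hkd : k ≤ d := hk ▸ (Finset.card_filter_le _ _).trans (Finset.card_range d).le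
  have hpow : min p ℓ ^ k ≤ m + 1 :=
    calc min p ℓ ^ k ≤ min p ℓ ^ d := Nat.pow_le_pow_right (by omega) hkd
      _ ≤ a d * P d := hPd.trans (Nat.le_mul_of_pos_left _ (Nat.pos_of_ne_zero hlead))
      _ ≤ m + 1 := hlead_le
  have hq : (1 : ℝ) < min (p : ℝ) ℓ := by rw [← Nat.cast_min]; exact_mod_cast (le_min hp hl)
  have h2k := two_pow_le_rpow_inv_logb_of_pow_le hq (x := ((m + 1 : ℕ) : ℝ))
    (by rw [← Nat.cast_min]; exact_mod_cast hpow)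
  calc ((2 ^ k * a d * P d : ℕ) : ℝ) = 2 ^ k * ((a d * P d : ℕ) : ℝ) := by push_cast; ring
    _ ≤ ((m + 1 : ℕ) : ℝ) ^ (1 / logb 2 (min (p : ℝ) ℓ)) * ((m + 1 : ℕ) : ℝ) :=
        mul_le_mul h2k (by exact_mod_cast hlead_le) (by positivity) (by positivity)
    _ = ((m + 1 : ℕ) : ℝ) ^ (1 + 1 / logb 2 (min (p : ℝ) ℓ)) := by
        rw [rpow_add (by positivity), rpow_one, mul_comm]

theorem stmt13 (p ℓ : ℕ) (hp : 2 ≤ p) (hl : 2 ≤ ℓ) (m : ℕ) (d : ℕ) (a : ℕ → ℕ)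
    (P : ℕ → ℕ) (hP0 : P 0 = 1) (hP : ∀ i : ℕ, 1 ≤ i → P i = p ^ (i - 1) * ℓ)
    (hdig0 : a 0 ≤ ℓ - 1) (hdig : ∀ i, 1 ≤ i → i ≤ d → a i ≤ p - 1) (hlead : a d ≠ 0)
    (hexp : m + 1 = ∑ i ∈ Finset.range (d + 1), a i * P i)
    (k : ℕ) (hk : k = (Finset.filter (fun i => a i ≠ 0) (Finset.range d)).card) :
    ((2 ^ k * a d * P d : ℕ) : ℝ) ≤
      ((m + 1 : ℕ) : ℝ) ^ (1 + 1 / Real.logb 2 (min p ℓ)) :=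
  stmt13_general p ℓ hp hl m d a P hP0 hP hlead hexp k hk
end

section
/- Let M ≥ 1 be a natural number and let b : ℕ → ℝ be a sequence satisfying 1 ≤ b(n) ≤ M^n for all n and the supermultiplicativity condition b(n)·b(m) ≤ b(n+m) for all n, m. If liminf_{n→∞} (Σ_{i=0}^n C(n,i)·b(i))^{1/n} ≥ M + 1 (where C(n,i) is the binomial coefficient), then the limit lim_{n→∞} b(n)^{1/n} exists and equals M. -/
/-!
By Fekete's lemma applied to the subadditive sequence `-log b n`, the roots `b n ^ (1/n)`
converge to some `ρ` with `b n ≤ ρ ^ n` for every `n`. The bound `b n ≤ M ^ n` gives `ρ ≤ M`.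
Conversely, the binomial theorem bounds `∑ C(n,i) b i` by `(ρ + 1) ^ n`, so the liminf
hypothesis forces `M + 1 ≤ ρ + 1`.
-/

open Filter Real Set

section Supermultiplicative

variable {b : ℕ → ℝ}

lemma subadditive_neg_log_of_supermultiplicative (hpos : ∀ n, 0 < b n)
    (hsuper : ∀ m n, b m * b n ≤ b (m + n)) : Subadditive fun n => -log (b n) := by
  intro m n
  have h := log_le_log (mul_pos (hpos m) (hpos n)) (hsuper m n)
  rw [log_mul (hpos m).ne' (hpos n).ne'] at h
  linarith

lemma bddBelow_neg_log_div_of_le_pow (hpos : ∀ n, 0 < b n) {C : ℝ} (hC : ∀ n, b n ≤ C ^ n) :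
    BddBelow (range fun n : ℕ => -log (b n) / n) := by
  refine ⟨-|log C|, ?_⟩
  rintro _ ⟨n, rfl⟩
  rcases Nat.eq_zero_or_pos n with rfl | hn
  · simp
  · have hlog : log (b n) ≤ n * log C := by
      rw [← log_pow]; exact log_le_log (hpos n) (hC n)
    change -|log C| ≤ -log (b n) / n
    rw [neg_div, neg_le_neg_iff, div_le_iff₀ (by exact_mod_cast hn)]
    nlinarith [le_abs_self (log C), (Nat.cast_pos.mpr hn : (0 : ℝ) < n)]

theorem exists_tendsto_rpow_inv_of_supermultiplicative (hpos : ∀ n, 0 < b n)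
    (hsuper : ∀ m n, b m * b n ≤ b (m + n)) {C : ℝ} (hC : ∀ n, b n ≤ C ^ n) :
    ∃ ρ, Tendsto (fun n : ℕ => b n ^ (n : ℝ)⁻¹) atTop (nhds ρ) ∧ ∀ n, b n ≤ ρ ^ n := by
  have hsub := subadditive_neg_log_of_supermultiplicative hpos hsuper
  have hbdd := bddBelow_neg_log_div_of_le_pow hpos hC
  refine ⟨exp (-hsub.lim), ?_, fun n => ?_⟩
  · have hroot : (fun n : ℕ => b n ^ (n : ℝ)⁻¹) = fun n => exp (-(-log (b n) / n)) := by
      funext n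
      rw [rpow_def_of_pos (hpos n), neg_div, neg_neg, div_eq_mul_inv]
    rw [hroot]
    exact (continuous_exp.tendsto _).comp (hsub.tendsto_lim hbdd).neg
  · rcases Nat.eq_zero_or_pos n with rfl | hn
    · simpa using le_of_mul_le_mul_right (by simpa using hsuper 0 0) (hpos 0)
    · have hlim : hsub.lim ≤ -log (b n) / n := hsub.lim_le_div hbdd hn.ne'
      rw [neg_div, le_neg, div_le_iff₀ (by exact_mod_cast hn)] at hlim
      rw [← exp_nat_mul, ← log_le_iff_le_exp (hpos n)]
      linarith

end Supermultiplicative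

lemma sum_choose_mul_le_add_one_pow {b : ℕ → ℝ} {ρ : ℝ} (hρ : ∀ n, b n ≤ ρ ^ n) (n : ℕ) :
    ∑ i ∈ Finset.range (n + 1), (n.choose i : ℝ) * b i ≤ (ρ + 1) ^ n := by
  rw [add_pow]
  refine Finset.sum_le_sum fun i _ => ?_
  rw [one_pow, mul_one, mul_comm]
  exact mul_le_mul_of_nonneg_right (hρ i) (Nat.cast_nonneg _)

lemma liminf_sum_choose_mul_rpow_inv_le {b : ℕ → ℝ} {ρ : ℝ} (hb : ∀ n, 0 ≤ b n)
    (hρ : ∀ n, b n ≤ ρ ^ n) :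
    liminf (fun n : ℕ => (∑ i ∈ Finset.range (n + 1), (n.choose i : ℝ) * b i) ^ (n : ℝ)⁻¹)
      atTop ≤ ρ + 1 := by
  have hρ0 : 0 ≤ ρ := by simpa using (hb 1).trans (hρ 1)
  have hsum0 : ∀ n : ℕ, 0 ≤ ∑ i ∈ Finset.range (n + 1), (n.choose i : ℝ) * b i :=
    fun n => Finset.sum_nonneg fun i _ => mul_nonneg (Nat.cast_nonneg _) (hb i)
  refine liminf_le_of_frequently_le (Eventually.frequently ?_)
    (isBoundedUnder_of ⟨0, fun n => rpow_nonneg (hsum0 n) _⟩)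
  filter_upwards [eventually_ne_atTop 0] with n hn
  calc (∑ i ∈ Finset.range (n + 1), (n.choose i : ℝ) * b i) ^ (n : ℝ)⁻¹
      ≤ ((ρ + 1) ^ n) ^ (n : ℝ)⁻¹ :=
        rpow_le_rpow (hsum0 n) (sum_choose_mul_le_add_one_pow hρ n) (by positivity)
    _ = ρ + 1 := pow_rpow_inv_natCast (by positivity) hn

theorem stmt14_general (M : ℕ) (b : ℕ → ℝ)
    (hb1 : ∀ n : ℕ, 1 ≤ b n) (hbM : ∀ n : ℕ, b n ≤ (M : ℝ) ^ n)
    (hsuper : ∀ n m : ℕ, b n * b m ≤ b (n + m))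
    (hliminf : (M : ℝ) + 1 ≤
      Filter.liminf
        (fun n : ℕ => (∑ i ∈ Finset.range (n + 1), (n.choose i : ℝ) * b i) ^ ((n : ℝ)⁻¹))
        Filter.atTop) :
    Filter.Tendsto (fun n : ℕ => b n ^ ((n : ℝ)⁻¹)) Filter.atTop (nhds (M : ℝ)) := by
  have hpos : ∀ n, 0 < b n := fun n => one_pos.trans_le (hb1 n)
  obtain ⟨ρ, hlim, hρ⟩ := exists_tendsto_rpow_inv_of_supermultiplicative hpos hsuper hbM
  have hρM : ρ ≤ M := by
    refine le_of_tendsto hlim ?_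
    filter_upwards [eventually_ne_atTop 0] with n hn
    calc b n ^ (n : ℝ)⁻¹ ≤ ((M : ℝ) ^ n) ^ (n : ℝ)⁻¹ :=
          rpow_le_rpow (hpos n).le (hbM n) (by positivity)
      _ = M := pow_rpow_inv_natCast (Nat.cast_nonneg M) hn
  have hMρ : (M : ℝ) ≤ ρ := by
    linarith [liminf_sum_choose_mul_rpow_inv_le (fun n => (hpos n).le) hρ]
  rwa [le_antisymm hρM hMρ] at hlim

theorem stmt14 (M : ℕ) (hM : 1 ≤ M) (b : ℕ → ℝ)
    (hb1 : ∀ n : ℕ, 1 ≤ b n) (hbM : ∀ n : ℕ, b n ≤ (M : ℝ) ^ n)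
    (hsuper : ∀ n m : ℕ, b n * b m ≤ b (n + m))
    (hliminf : (M : ℝ) + 1 ≤
      Filter.liminf
        (fun n : ℕ => (∑ i ∈ Finset.range (n + 1), (n.choose i : ℝ) * b i) ^ ((n : ℝ)⁻¹))
        Filter.atTop) :
    Filter.Tendsto (fun n : ℕ => b n ^ ((n : ℝ)⁻¹)) Filter.atTop (nhds (M : ℝ)) :=
  stmt14_general M b hb1 hbM hsuper hliminf
end

section
/- Let M ≥ 1 be a natural number and let x : ℕ → Fin M → ℕ be such that Σ_{i} x(n)(i) = n for every n, and suppose there exists a real constant C > 0 such that |x(n)(i) − n/M| ≤ C·√n for all n ≥ 1 and all i. Then the multinomial coefficients a(n) = n!/(x(n)(0)!·x(n)(1)!⋯x(n)(M−1)!) satisfy lim_{n→∞} a(n)^{1/n} = M. -/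
/-!
By Stirling, `log k! = k log k - k + O(log k)` uniformly in `k`, so with `Σ xᵢ = n` the
linear terms cancel and `log (n! / ∏ xᵢ!) = n · Σ negMulLog (xᵢ / n) + O(log n)`. Dividing by `n`,
the frequencies `xᵢ / n` tend to `1 / M` and, by continuity of `negMulLog`, the entropy term tends to
`M · negMulLog (1 / M) = log M`.
-/

open Filter Real Topology Finset
open scoped Nat

lemma log_factorial_le (k : ℕ) : log k ! ≤ k * log k - k + log k / 2 + 1 := by
  obtain _ | m := k
  · simp
  have hseq : Stirling.stirlingSeq (m + 1) ≤ exp 1 / √2 :=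
    Stirling.stirlingSeq_one ▸ Stirling.stirlingSeq'_antitone (Nat.zero_le m)
  have hlog_seq : log (Stirling.stirlingSeq (m + 1)) ≤ 1 - log 2 / 2 := by
    calc log (Stirling.stirlingSeq (m + 1)) ≤ log (exp 1 / √2) :=
          log_le_log (Stirling.stirlingSeq'_pos m) hseq
      _ = 1 - log 2 / 2 := by
          rw [log_div (exp_ne_zero 1) (by positivity), log_exp, log_sqrt zero_le_two]
  have hformula := Stirling.log_stirlingSeq_formula (m + 1)
  rw [log_mul two_ne_zero (by positivity), log_div (by positivity) (exp_ne_zero 1),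
    log_exp] at hformula
  linarith

lemma le_log_factorial (k : ℕ) : k * log k - k ≤ log k ! := by
  obtain rfl | hk := eq_or_ne k 0
  · simp
  have hstirling := Stirling.le_log_factorial_stirling hk
  have hlog_two_pi : 0 ≤ log (2 * π) := log_nonneg (by linarith [pi_gt_three])
  linarith [log_natCast_nonneg k]

noncomputable def logFactorialError (k : ℕ) : ℝ := log k ! - (k * log k - k)

lemma logFactorialError_nonneg (k : ℕ) : 0 ≤ logFactorialError k :=
  sub_nonneg.2 (le_log_factorial k)

lemma logFactorialError_le_of_le {k n : ℕ} (hkn : k ≤ n) : logFactorialError k ≤ log n + 1 := by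
  have hlog : log k ≤ log n := by
    obtain rfl | hk := eq_or_ne k 0
    · simpa using log_natCast_nonneg n
    exact log_le_log (by positivity) (by exact_mod_cast hkn)
  unfold logFactorialError
  linarith [log_factorial_le k, log_natCast_nonneg k]

section Multinomial

variable {ι : Type*} [Fintype ι]

lemma mul_negMulLog_div {x n : ℝ} (hn : n ≠ 0) :
    n * negMulLog (x / n) = x * log n - x * log x := by
  rw [div_eq_mul_inv, negMulLog_mul, negMulLog, negMulLog, log_inv]
  field_simp
  ring

lemma log_multinomial_eq {x : ι → ℕ} {n : ℕ} (hn : n ≠ 0) (hsum : ∑ i, x i = n) :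
    log (n ! / ∏ i, ((x i)! : ℝ)) =
      n * ∑ i, negMulLog (x i / n) + (logFactorialError n - ∑ i, logFactorialError (x i)) := by
  have hsum' : ∑ i, (x i : ℝ) = n := by exact_mod_cast hsum
  rw [log_div (by positivity) (by positivity), log_prod (fun i _ => by positivity), mul_sum]
  simp only [mul_negMulLog_div (Nat.cast_ne_zero.2 hn), logFactorialError, sum_sub_distrib,
    ← sum_mul, hsum']
  ring

lemma abs_logFactorialError_sub_sum_le {x : ι → ℕ} {n : ℕ} (hsum : ∑ i, x i = n) :
    |logFactorialError n - ∑ i, logFactorialError (x i)| ≤ (Fintype.card ι + 1) * (log n + 1) := by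
  have hx_le : ∀ i, logFactorialError (x i) ≤ log n + 1 := fun i =>
    logFactorialError_le_of_le (hsum ▸ single_le_sum (fun j _ => Nat.zero_le (x j)) (mem_univ i))
  have hsum_le : ∑ i, logFactorialError (x i) ≤ Fintype.card ι * (log n + 1) := by
    simpa [mul_add] using sum_le_sum fun i (_ : i ∈ univ) => hx_le i
  have hsum_nonneg := sum_nonneg fun i (_ : i ∈ univ) => logFactorialError_nonneg (x i)
  have hn_le := logFactorialError_le_of_le (le_refl n)
  rw [abs_le]
  constructor <;> linarith [logFactorialError_nonneg n, log_natCast_nonneg n]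

lemma tendsto_log_add_one_div_atTop :
    Tendsto (fun n : ℕ => (log n + 1) / n) atTop (𝓝 0) := by
  have hlog : Tendsto (fun x : ℝ => log x / x) atTop (𝓝 0) := by
    simpa using tendsto_pow_log_div_mul_add_atTop 1 0 1 one_ne_zero
  simpa [add_div] using (hlog.comp tendsto_natCast_atTop_atTop).add
    tendsto_one_div_atTop_nhds_zero_nat

theorem tendsto_log_multinomial_div {x : ℕ → ι → ℕ} (hsum : ∀ n, ∑ i, x n i = n) {p : ι → ℝ}
    (hp : ∀ i, Tendsto (fun n => (x n i : ℝ) / n) atTop (𝓝 (p i))) :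
    Tendsto (fun n : ℕ => log (n ! / ∏ i, ((x n i)! : ℝ)) / n) atTop
      (𝓝 (∑ i, negMulLog (p i))) := by
  have hmain : Tendsto (fun n : ℕ => ∑ i, negMulLog (x n i / n)) atTop
      (𝓝 (∑ i, negMulLog (p i))) :=
    tendsto_finsetSum _ fun i _ => (continuous_negMulLog.tendsto _).comp (hp i)
  have herror : Tendsto
      (fun n : ℕ => (logFactorialError n - ∑ i, logFactorialError (x n i)) / n) atTop (𝓝 0) := by
    have hbound := tendsto_log_add_one_div_atTop.const_mul ((Fintype.card ι : ℝ) + 1)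
    rw [mul_zero] at hbound
    refine squeeze_zero_norm' (Eventually.of_forall fun n => ?_) hbound
    rw [norm_div, Real.norm_natCast, ← mul_div_assoc]
    gcongr
    exact abs_logFactorialError_sub_sum_le (hsum n)
  refine (add_zero (∑ i, negMulLog (p i)) ▸ hmain.add herror).congr' ?_
  filter_upwards [eventually_ne_atTop 0] with n hn
  rw [log_multinomial_eq hn (hsum n)]
  field_simp

theorem tendsto_multinomial_rpow_inv {x : ℕ → ι → ℕ} (hsum : ∀ n, ∑ i, x n i = n) {p : ι → ℝ}
    (hp : ∀ i, Tendsto (fun n => (x n i : ℝ) / n) atTop (𝓝 (p i))) :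
    Tendsto (fun n : ℕ => ((n ! : ℝ) / ∏ i, ((x n i)! : ℝ)) ^ (n : ℝ)⁻¹) atTop
      (𝓝 (exp (∑ i, negMulLog (p i)))) := by
  refine ((continuous_exp.tendsto _).comp (tendsto_log_multinomial_div hsum hp)).congr fun n => ?_
  rw [Function.comp_apply, rpow_def_of_pos (by positivity), div_eq_mul_inv]

end Multinomial

lemma tendsto_div_of_abs_sub_le_mul_sqrt {y : ℕ → ℝ} {c C : ℝ}
    (h : ∀ n : ℕ, 1 ≤ n → |y n - n * c| ≤ C * √n) : Tendsto (fun n => y n / n) atTop (𝓝 c) := by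
  rw [tendsto_iff_norm_sub_tendsto_zero]
  refine squeeze_zero_norm' ?_ ((tendsto_const_nhds (x := C)).div_atTop
    (tendsto_sqrt_atTop.comp tendsto_natCast_atTop_atTop))
  filter_upwards [eventually_ge_atTop 1] with n hn
  have hn0 : (0 : ℝ) < n := by exact_mod_cast hn
  have hsqrt0 : 0 < √(n : ℝ) := sqrt_pos.2 hn0
  rw [norm_norm, Real.norm_eq_abs, show y n / n - c = (y n - n * c) / n by field_simp,
    abs_div, abs_of_pos hn0, div_le_iff₀ hn0]
  calc |y n - n * c| ≤ C * √n := h n hn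
    _ = C / √n * n := by
        rw [div_mul_eq_mul_div, eq_div_iff hsqrt0.ne', mul_assoc, mul_self_sqrt hn0.le]

theorem stmt15_general (M : ℕ) (hM : 1 ≤ M) (x : ℕ → Fin M → ℕ)
    (hsum : ∀ n : ℕ, ∑ i, x n i = n)
    (C : ℝ)
    (hx : ∀ n : ℕ, 1 ≤ n → ∀ i : Fin M, |(x n i : ℝ) - (n : ℝ) / (M : ℝ)| ≤ C * Real.sqrt n) :
    Filter.Tendsto
      (fun n : ℕ => ((n.factorial : ℝ) / ∏ i, ((x n i).factorial : ℝ)) ^ ((n : ℝ)⁻¹))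
      Filter.atTop (nhds (M : ℝ)) := by
  have hM0 : (0 : ℝ) < M := by exact_mod_cast hM
  have hp : ∀ i, Tendsto (fun n => (x n i : ℝ) / n) atTop (𝓝 (M : ℝ)⁻¹) := fun i =>
    tendsto_div_of_abs_sub_le_mul_sqrt fun n hn => by simpa [div_eq_mul_inv] using hx n hn i
  have hentropy : ∑ _i : Fin M, negMulLog (M : ℝ)⁻¹ = log M := by
    rw [sum_const, card_univ, Fintype.card_fin, nsmul_eq_mul, negMulLog, log_inv]
    field_simp
  simpa [hentropy, exp_log hM0] using tendsto_multinomial_rpow_inv hsum hp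

theorem stmt15 (M : ℕ) (hM : 1 ≤ M) (x : ℕ → Fin M → ℕ)
    (hsum : ∀ n : ℕ, ∑ i, x n i = n)
    (C : ℝ) (hC : 0 < C)
    (hx : ∀ n : ℕ, 1 ≤ n → ∀ i : Fin M, |(x n i : ℝ) - (n : ℝ) / (M : ℝ)| ≤ C * Real.sqrt n) :
    Filter.Tendsto
      (fun n : ℕ => ((n.factorial : ℝ) / ∏ i, ((x n i).factorial : ℝ)) ^ ((n : ℝ)⁻¹))
      Filter.atTop (nhds (M : ℝ)) :=
  stmt15_general M hM x hsum C hx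
end
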